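/- For 1/2 < a < 1, De Rham's function R_a is pointwise Hölder of exponent −log₂ a at every x ∈ [0,1], hence its forward and backward fractional velocities of any order β' < −log₂ a are zero everywhere. -/
import Mathlib


open Real Filter Set

lemma deRham_dyadic (a : ℝ) (ha0 : 1/2 < a) (ha1 : a < 1) (R : ℝ → ℝ)
    (h4 : ∀ x : ℝ, 0 ≤ x → x ≤ 1/2 → R x = a * R (2*x))
    (h5 : ∀ x : ℝ, 1/2 ≤ x → x ≤ 1 → R x = (1-a) * R (2*x-1) + a)
    (K : ℝ) (hK : ∀ x ∈ Icc (0:ℝ) 1, ∀ y ∈ Icc (0:ℝ) 1, |R x - R y| ≤ K) :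
    ∀ n k : ℕ, k < 2^n →
      ∀ x ∈ Icc ((k:ℝ)*(2⁻¹)^n) (((k:ℝ)+1)*(2⁻¹)^n),
      ∀ y ∈ Icc ((k:ℝ)*(2⁻¹)^n) (((k:ℝ)+1)*(2⁻¹)^n),
        |R x - R y| ≤ K * a^n := by
  have ha0' : (0:ℝ) < a := by linarith
  have hK0 : 0 ≤ K := by
    have := hK 0 (by norm_num) 0 (by norm_num); simpa using this
  intro n
  induction n with
  | zero =>
    intro k hk x hx y hy
    interval_cases k
    · simp only [pow_zero, mul_one, Nat.cast_zero, zero_add] at hx hy ⊢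
      have := hK x (by simpa using hx) y (by simpa using hy)
      simpa using this
  | succ n ih =>
    intro k hk x hx y hy
    have hpow : (2:ℝ)^n * (2⁻¹)^n = 1 := by
      rw [← mul_pow]; norm_num
    have hq0 : (0:ℝ) < (2⁻¹:ℝ)^n := by positivity
    rw [pow_succ] at hx hy
    rcases lt_or_ge k (2^n) with hlt | hge
    · -- left half
      have hk1 : (k:ℝ)+1 ≤ 2^n := by
        have : (k:ℕ)+1 ≤ 2^n := hlt
        exact_mod_cast this
      have hprod : ((k:ℝ)+1) * (2⁻¹)^n ≤ (2:ℝ)^n * (2⁻¹)^n :=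
        mul_le_mul_of_nonneg_right hk1 hq0.le
      have hx0 : 0 ≤ x := le_trans (by positivity) hx.1
      have hy0 : 0 ≤ y := le_trans (by positivity) hy.1
      have hx2 : x ≤ 1/2 := by linarith [hx.2, hprod, hpow]
      have hy2 : y ≤ 1/2 := by linarith [hy.2, hprod, hpow]
      have hmx : 2*x ∈ Icc ((k:ℝ)*(2⁻¹)^n) (((k:ℝ)+1)*(2⁻¹)^n) := by
        constructor <;> linarith [hx.1, hx.2]
      have hmy : 2*y ∈ Icc ((k:ℝ)*(2⁻¹)^n) (((k:ℝ)+1)*(2⁻¹)^n) := by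
        constructor <;> linarith [hy.1, hy.2]
      have ihxy := ih k hlt (2*x) hmx (2*y) hmy
      rw [h4 x hx0 hx2, h4 y hy0 hy2, ← mul_sub, abs_mul, abs_of_pos ha0']
      calc a * |R (2*x) - R (2*y)| ≤ a * (K * a^n) := by
            exact mul_le_mul_of_nonneg_left ihxy (le_of_lt ha0')
        _ = K * a^(n+1) := by ring
    · -- right half
      have hj : k - 2^n < 2^n := by
        have h2 : (2:ℕ)^(n+1) = 2^n * 2 := pow_succ 2 n
        omega
      have hkj : ((k - 2^n : ℕ):ℝ) = (k:ℝ) - 2^n := by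
        push_cast [Nat.cast_sub hge]; ring
      have hgeR : (2:ℝ)^n ≤ (k:ℝ) := by exact_mod_cast hge
      have hprod : (2:ℝ)^n * (2⁻¹)^n ≤ (k:ℝ) * (2⁻¹)^n :=
        mul_le_mul_of_nonneg_right hgeR hq0.le
      have hkub : (k:ℝ)+1 ≤ 2*2^n := by
        have h1 : (k:ℕ)+1 ≤ 2^(n+1) := hk
        have h2 : (2:ℕ)^(n+1) = 2 * 2^n := by rw [pow_succ]; ring
        have : (k:ℕ)+1 ≤ 2*2^n := by omega
        exact_mod_cast this
      have hprod2 : ((k:ℝ)+1) * (2⁻¹)^n ≤ (2*2^n) * (2⁻¹)^n :=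
        mul_le_mul_of_nonneg_right hkub hq0.le
      have hx1 : 1/2 ≤ x := by linarith [hx.1, hprod, hpow]
      have hy1 : 1/2 ≤ y := by linarith [hy.1, hprod, hpow]
      have hx2 : x ≤ 1 := by linarith [hx.2, hprod2, hpow]
      have hy2 : y ≤ 1 := by linarith [hy.2, hprod2, hpow]
      have hmx : 2*x-1 ∈ Icc (((k - 2^n:ℕ):ℝ)*(2⁻¹)^n) ((((k - 2^n:ℕ):ℝ)+1)*(2⁻¹)^n) := by
        rw [hkj]
        constructor <;> linarith [hx.1, hx.2, hpow]
      have hmy : 2*y-1 ∈ Icc (((k - 2^n:ℕ):ℝ)*(2⁻¹)^n) ((((k - 2^n:ℕ):ℝ)+1)*(2⁻¹)^n) := by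
        rw [hkj]
        constructor <;> linarith [hy.1, hy.2, hpow]
      have ihxy := ih (k - 2^n) hj (2*x-1) hmx (2*y-1) hmy
      rw [h5 x hx1 hx2, h5 y hy1 hy2]
      have heq : (1-a) * R (2*x-1) + a - ((1-a) * R (2*y-1) + a)
          = (1-a) * (R (2*x-1) - R (2*y-1)) := by ring
      rw [heq, abs_mul, abs_of_pos (by linarith : (0:ℝ) < 1-a)]
      calc (1-a) * |R (2*x-1) - R (2*y-1)| ≤ (1-a) * (K * a^n) :=
            mul_le_mul_of_nonneg_left ihxy (by linarith)
        _ ≤ a * (K * a^n) := mul_le_mul_of_nonneg_right (by linarith) (by positivity)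
        _ = K * a^(n+1) := by ring

lemma deRham_pair (a : ℝ) (K : ℝ) (R : ℝ → ℝ) (hK0 : 0 ≤ K)
    (key : ∀ n k : ℕ, k < 2^n →
      ∀ x ∈ Icc ((k:ℝ)*(2⁻¹)^n) (((k:ℝ)+1)*(2⁻¹)^n),
      ∀ y ∈ Icc ((k:ℝ)*(2⁻¹)^n) (((k:ℝ)+1)*(2⁻¹)^n),
        |R x - R y| ≤ K * a^n)
    (ha0' : (0:ℝ) < a)
    (m : ℕ) (x y : ℝ) (hx : x ∈ Icc (0:ℝ) 1) (hy : y ∈ Icc (0:ℝ) 1)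
    (hxy : x ≤ y) (hd : y - x ≤ (2⁻¹)^m) :
    |R x - R y| ≤ 2 * K * a^m := by
  have hpow : (2:ℝ)^m * (2⁻¹)^m = 1 := by rw [← mul_pow]; norm_num
  have hq0 : (0:ℝ) < (2⁻¹:ℝ)^m := by positivity
  have h2m1 : 1 ≤ (2:ℕ)^m := Nat.one_le_two_pow
  have hKa : 0 ≤ K * a^m := mul_nonneg hK0 (pow_nonneg ha0'.le m)
  set k : ℕ := min (Nat.floor (x * 2^m)) (2^m - 1) with hk
  have hklt : k < 2^m := by omega
  have ex : x * 2^m * (2⁻¹)^m = x := by rw [mul_assoc, hpow, mul_one]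
  have hx2m : 0 ≤ x * 2^m := by nlinarith [hx.1]
  have hkR : (k:ℝ) ≤ x * 2^m := by
    rcases le_or_gt ((Nat.floor (x * 2^m) : ℕ)) (2^m - 1) with h | h
    · have hkv : k = Nat.floor (x * 2^m) := by omega
      rw [hkv]; exact Nat.floor_le hx2m
    · have hkv : k = 2^m - 1 := by omega
      have hfl : ((Nat.floor (x * 2^m) : ℕ) : ℝ) ≤ x * 2^m := Nat.floor_le hx2m
      have h2 : ((2:ℕ)^m : ℝ) ≤ x * 2^m := by
        have hcast : ((2:ℕ)^m : ℝ) ≤ ((Nat.floor (x * 2^m) : ℕ) : ℝ) := by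
          exact_mod_cast (by omega : (2:ℕ)^m ≤ Nat.floor (x*2^m))
        linarith
      rw [hkv]
      have hle : ((2^m - 1 : ℕ) : ℝ) ≤ ((2^m : ℕ) : ℝ) := by exact_mod_cast Nat.sub_le _ _
      push_cast at h2 hle ⊢
      linarith
  have hxmem : x ∈ Icc ((k:ℝ)*(2⁻¹)^m) (((k:ℝ)+1)*(2⁻¹)^m) := by
    constructor
    · have := mul_le_mul_of_nonneg_right hkR hq0.le
      linarith [ex ▸ this]
    · rcases le_or_gt ((Nat.floor (x * 2^m) : ℕ)) (2^m - 1) with h | h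
      · have hkv : k = Nat.floor (x * 2^m) := by omega
        have hlt : x * 2^m < (k:ℝ) + 1 := by rw [hkv]; exact Nat.lt_floor_add_one _
        have := mul_le_mul_of_nonneg_right hlt.le hq0.le
        linarith [ex ▸ this]
      · have hkv : k = 2^m - 1 := by omega
        have hkc : (k:ℝ) = 2^m - 1 := by
          rw [hkv]; push_cast [Nat.cast_sub h2m1]; ring
        rw [hkc]
        have : ((2:ℝ)^m - 1 + 1) * (2⁻¹)^m = 1 := by
          have : ((2:ℝ)^m - 1 + 1) * (2⁻¹)^m = 2^m * (2⁻¹)^m := by ring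
          rw [this, hpow]
        rw [this]; exact hx.2
  rcases le_or_gt y (((k:ℝ)+1)*(2⁻¹)^m) with hcase | hcase
  · have hymem : y ∈ Icc ((k:ℝ)*(2⁻¹)^m) (((k:ℝ)+1)*(2⁻¹)^m) :=
      ⟨le_trans hxmem.1 hxy, hcase⟩
    have := key m k hklt x hxmem y hymem
    linarith
  · have hk1lt : k + 1 < 2^m := by
      by_contra hcon
      have hkeq : k + 1 = 2^m := by omega
      have hpe : ((k:ℝ)+1) * (2⁻¹)^m = 1 := by
        have hc : ((k:ℝ)+1) = 2^m := by exact_mod_cast hkeq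
        rw [hc, hpow]
      rw [hpe] at hcase
      linarith [hy.2]
    have hymem : y ∈ Icc (((k+1:ℕ):ℝ)*(2⁻¹)^m) ((((k+1:ℕ):ℝ)+1)*(2⁻¹)^m) := by
      constructor
      · push_cast; linarith
      · push_cast
        have hyx : y ≤ x + (2⁻¹)^m := by linarith
        have := hxmem.2
        linarith
    have hpmem1 : ((k:ℝ)+1)*(2⁻¹)^m ∈ Icc ((k:ℝ)*(2⁻¹)^m) (((k:ℝ)+1)*(2⁻¹)^m) :=
      ⟨by linarith, le_refl _⟩
    have hpmem2 : ((k:ℝ)+1)*(2⁻¹)^m ∈ Icc (((k+1:ℕ):ℝ)*(2⁻¹)^m) ((((k+1:ℕ):ℝ)+1)*(2⁻¹)^m) := by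
      constructor
      · push_cast; linarith
      · push_cast; linarith
    have h1 := key m k hklt x hxmem (((k:ℝ)+1)*(2⁻¹)^m) hpmem1
    have h2 := key m (k+1) hk1lt (((k:ℝ)+1)*(2⁻¹)^m) hpmem2 y hymem
    calc |R x - R y| ≤ |R x - R (((k:ℝ)+1)*(2⁻¹)^m)| + |R (((k:ℝ)+1)*(2⁻¹)^m) - R y| :=
          abs_sub_le _ _ _
      _ ≤ 2 * K * a^m := by
          have h2' : |R (((k:ℝ)+1)*(2⁻¹)^m) - R y| ≤ K * a^m := by
            have := key m (k+1) hk1lt (((k:ℝ)+1)*(2⁻¹)^m) ?_ y ?_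
            · convert this using 3 <;> push_cast <;> ring
            · exact hpmem2
            · exact hymem
          linarith

lemma deRham_holder (a K : ℝ) (R : ℝ → ℝ) (hK0 : 0 ≤ K) (ha0' : (0:ℝ) < a)
    (key : ∀ n k : ℕ, k < 2^n →
      ∀ x ∈ Icc ((k:ℝ)*(2⁻¹)^n) (((k:ℝ)+1)*(2⁻¹)^n),
      ∀ y ∈ Icc ((k:ℝ)*(2⁻¹)^n) (((k:ℝ)+1)*(2⁻¹)^n),
        |R x - R y| ≤ K * a^n)
    (pair : ∀ (m : ℕ) (x y : ℝ), x ∈ Icc (0:ℝ) 1 → y ∈ Icc (0:ℝ) 1 →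
      x ≤ y → y - x ≤ (2⁻¹)^m → |R x - R y| ≤ 2 * K * a^m)
    (α : ℝ) (hhalf : (2⁻¹:ℝ) ^ α = a) (hαpos : 0 < α) (hα1 : α ≤ 1) :
    ∀ x ∈ Icc (0:ℝ) 1, ∀ y ∈ Icc (0:ℝ) 1,
      |R x - R y| ≤ (4*K+4) * |x - y| ^ α := by
  suffices H : ∀ x ∈ Icc (0:ℝ) 1, ∀ y ∈ Icc (0:ℝ) 1, x ≤ y →
      |R x - R y| ≤ (4*K+4) * |x - y| ^ α by
    intro x hx y hy
    rcases le_total x y with h | h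
    · exact H x hx y hy h
    · rw [abs_sub_comm (R x), abs_sub_comm x]
      exact H y hy x hx h
  intro x hx y hy hxy
  rcases eq_or_lt_of_le hxy with rfl | hlt
  · rw [sub_self, sub_self, abs_zero, Real.zero_rpow hαpos.ne', mul_zero]
  · have hd0 : 0 < y - x := by linarith
    have hd1 : y - x ≤ 1 := by linarith [hx.1, hy.2]
    obtain ⟨n0, hn0⟩ := exists_pow_lt_of_lt_one hd0 (by norm_num : (2⁻¹:ℝ) < 1)
    have hex : ∃ m, (2⁻¹:ℝ)^(m+1) < y - x :=
      ⟨n0, lt_of_le_of_lt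
        (pow_le_pow_of_le_one (by norm_num) (by norm_num) (Nat.le_succ n0)) hn0⟩
    classical
    set m := Nat.find hex with hmdef
    have hm1 : (2⁻¹:ℝ)^(m+1) < y - x := Nat.find_spec hex
    have hm2 : y - x ≤ (2⁻¹:ℝ)^m := by
      rcases Nat.eq_zero_or_pos m with h | h
      · rw [h]; simpa using hd1
      · have hmin := Nat.find_min hex (show m - 1 < m by omega)
        have hm1' : m - 1 + 1 = m := by omega
        rw [hm1'] at hmin
        linarith [not_lt.1 hmin]
    have hpair := pair m x y hx hy hxy hm2
    have h1 : ((2⁻¹:ℝ)^m) ^ α = a^m := by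
      rw [← Real.rpow_natCast (2⁻¹:ℝ) m, ← Real.rpow_mul (by norm_num),
        mul_comm (m:ℝ) α, Real.rpow_mul (by norm_num), hhalf, Real.rpow_natCast]
    have h2 : (2⁻¹:ℝ)^m ≤ 2*(y-x) := by
      rw [pow_succ] at hm1; linarith
    have h3 : a^m ≤ (2*(y-x))^α := by
      rw [← h1]; exact Real.rpow_le_rpow (by positivity) h2 hαpos.le
    have h4 : ((2*(y-x)):ℝ)^α = (2:ℝ)^α * (y-x)^α := Real.mul_rpow (by norm_num) hd0.le
    have h5 : (2:ℝ)^α ≤ 2 := by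
      calc (2:ℝ)^α ≤ (2:ℝ)^(1:ℝ) := Real.rpow_le_rpow_of_exponent_le one_le_two hα1
        _ = 2 := Real.rpow_one 2
    have hda : 0 ≤ (y-x)^α := Real.rpow_nonneg hd0.le α
    have h6 : a^m ≤ 2 * (y-x)^α := by
      have := mul_le_mul_of_nonneg_right h5 hda
      rw [h4] at h3; linarith
    have habs : |x - y| = y - x := by rw [abs_sub_comm]; exact abs_of_pos hd0
    rw [habs]
    calc |R x - R y| ≤ 2*K*a^m := hpair
      _ ≤ 2*K*(2*(y-x)^α) := mul_le_mul_of_nonneg_left h6 (by linarith)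
      _ ≤ (4*K+4) * (y-x)^α := by nlinarith [hda]

/-- De Rham's function with parameter `a`: the unique continuous function on
`[0,1]` with `R 0 = 0`, `R 1 = 1` satisfying the two functional equations. -/
def IsDeRham (a : ℝ) (R : ℝ → ℝ) : Prop :=
  ContinuousOn R (Set.Icc (0:ℝ) 1) ∧ R 0 = 0 ∧ R 1 = 1 ∧
  (∀ x : ℝ, 0 ≤ x → x < 1/2 → R x = a * R (2*x)) ∧
  (∀ x : ℝ, 1/2 ≤ x → x ≤ 1 → R x = (1 - a) * R (2*x - 1) + a)

/-- for `1/2 < a < 1`, De Rham's function `R_a` is pointwise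
Hölder of exponent `-log₂ a` at every `x ∈ [0,1]`; consequently, for every
order `β'` with `0 < β' < -log₂ a`, its forward fractional velocity vanishes
at every `x ∈ [0,1)` and its backward fractional velocity vanishes at every
`x ∈ (0,1]`. -/
theorem stmt11 (a : ℝ) (ha0 : 1/2 < a) (ha1 : a < 1)
    (R : ℝ → ℝ) (hR : IsDeRham a R) :
    (∀ x ∈ Set.Icc (0:ℝ) 1, ∃ C > (0:ℝ), ∃ δ > (0:ℝ),
      ∀ y ∈ Set.Icc (0:ℝ) 1, |x - y| ≤ δ →
        |R x - R y| ≤ C * |x - y| ^ (-Real.logb 2 a)) ∧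
    (∀ β' : ℝ, 0 < β' → β' < -Real.logb 2 a →
      (∀ x ∈ Set.Ico (0:ℝ) 1,
        Tendsto (fun ε : ℝ => (R (x + ε) - R x) / ε ^ β')
          (nhdsWithin 0 (Ioi 0)) (nhds 0)) ∧
      (∀ x ∈ Set.Ioc (0:ℝ) 1,
        Tendsto (fun ε : ℝ => (R x - R (x - ε)) / ε ^ β')
          (nhdsWithin 0 (Ioi 0)) (nhds 0))) := by
  obtain ⟨hcont, h0, h1, h4, h5⟩ := hR
  have ha0' : (0:ℝ) < a := by linarith
  set α : ℝ := -Real.logb 2 a with hαdef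
  have h2a : (2:ℝ) ^ Real.logb 2 a = a := Real.rpow_logb (by norm_num) (by norm_num) ha0'
  have hhalf : (2⁻¹:ℝ) ^ α = a := by
    rw [Real.inv_rpow (by norm_num), hαdef, Real.rpow_neg (by norm_num), inv_inv, h2a]
  have hαpos : 0 < α := by
    have := Real.logb_neg (b := 2) (by norm_num) ha0' ha1
    simp only [hαdef]; linarith
  have hα1 : α ≤ 1 := by
    have hlogb : Real.logb 2 ((2:ℝ) ^ (-1:ℝ)) < Real.logb 2 a := by
      apply Real.logb_lt_logb (by norm_num)
      · positivity
      · rw [show ((2:ℝ) ^ (-1:ℝ)) = 1/2 by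
          rw [Real.rpow_neg (by norm_num), Real.rpow_one]; norm_num]
        exact ha0
    rw [Real.logb_rpow (by norm_num) (by norm_num)] at hlogb
    simp only [hαdef]; linarith
  -- extended first functional equation
  have hhv : R (1/2) = a := by
    have := h5 (1/2) (le_refl _) (by norm_num)
    norm_num [h0] at this
    exact this
  have h4' : ∀ x : ℝ, 0 ≤ x → x ≤ 1/2 → R x = a * R (2*x) := by
    intro x hx0 hx2
    rcases lt_or_eq_of_le hx2 with h | h
    · exact h4 x hx0 h
    · rw [h]; norm_num [hhv, h1]
  -- global bound
  obtain ⟨C₀, hC₀⟩ := isCompact_Icc.exists_bound_of_continuousOn hcont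
  have hC₀0 : 0 ≤ C₀ := le_trans (norm_nonneg _) (hC₀ 0 (by norm_num))
  have hK : ∀ x ∈ Icc (0:ℝ) 1, ∀ y ∈ Icc (0:ℝ) 1, |R x - R y| ≤ 2*C₀ := by
    intro x hx y hy
    calc |R x - R y| ≤ |R x| + |R y| := abs_sub _ _
      _ ≤ 2*C₀ := by
        have h1 := hC₀ x hx; have h2 := hC₀ y hy
        simp only [Real.norm_eq_abs] at h1 h2; linarith
  have key := deRham_dyadic a ha0 ha1 R h4' h5 (2*C₀) hK
  have pair := fun (m : ℕ) (x y : ℝ) hx hy hxy hd =>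
    deRham_pair a (2*C₀) R (by linarith) key ha0' m x y hx hy hxy hd
  have holder := deRham_holder a (2*C₀) R (by linarith) ha0' key pair α hhalf hαpos hα1
  have hCpos : (0:ℝ) < 4*(2*C₀)+4 := by linarith
  constructor
  · intro x hx
    exact ⟨4*(2*C₀)+4, hCpos, 1, one_pos, fun y hy _ => holder x hx y hy⟩
  · intro β' hβ0 hβα
    have hsub : 0 < α - β' := by linarith
    -- tendsto of the majorant
    have htend : Tendsto (fun ε : ℝ => (4*(2*C₀)+4) * ε ^ (α - β'))
        (nhdsWithin 0 (Ioi 0)) (nhds 0) := by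
      have hc : ContinuousAt (fun t : ℝ => t ^ (α - β')) 0 :=
        Real.continuousAt_rpow_const 0 (α - β') (Or.inr hsub.le)
      have h0' : (0:ℝ) ^ (α - β') = 0 := Real.zero_rpow hsub.ne'
      have h2 : Tendsto (fun t : ℝ => t ^ (α - β')) (nhdsWithin 0 (Ioi 0))
          (nhds ((0:ℝ) ^ (α - β'))) := hc.tendsto.mono_left nhdsWithin_le_nhds
      have h3 := h2.const_mul (4*(2*C₀)+4)
      rw [h0', mul_zero] at h3
      exact h3
    constructor
    · intro x hx
      apply squeeze_zero_norm' _ htend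
      have hmem : Ioo (0:ℝ) (min 1 (1-x)) ∈ nhdsWithin (0:ℝ) (Ioi 0) :=
        Ioo_mem_nhdsGT_of_mem ⟨le_refl _, lt_min one_pos (by linarith [hx.2])⟩
      filter_upwards [hmem] with ε hε
      have hε0 : 0 < ε := hε.1
      have hε1 : ε < 1 := lt_of_lt_of_le hε.2 (min_le_left _ _)
      have hε2 : ε < 1 - x := lt_of_lt_of_le hε.2 (min_le_right _ _)
      have hxε : x + ε ∈ Icc (0:ℝ) 1 := ⟨by linarith [hx.1], by linarith⟩
      have hH := holder (x+ε) hxε x (Ico_subset_Icc_self hx)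
      have habs : |x + ε - x| = ε := by rw [show x + ε - x = ε by ring]; exact abs_of_pos hε0
      rw [habs] at hH
      have hrp : (0:ℝ) < ε ^ β' := Real.rpow_pos_of_pos hε0 β'
      rw [Real.norm_eq_abs, abs_div, abs_of_pos hrp]
      rw [show (4*(2*C₀)+4) * ε ^ (α - β') = ((4*(2*C₀)+4) * ε ^ α) / ε ^ β' by
        rw [Real.rpow_sub hε0]; ring]
      exact (div_le_div_iff_of_pos_right hrp).2 hH
    · intro x hx
      apply squeeze_zero_norm' _ htend
      have hmem : Ioo (0:ℝ) (min 1 x) ∈ nhdsWithin (0:ℝ) (Ioi 0) :=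
        Ioo_mem_nhdsGT_of_mem ⟨le_refl _, lt_min one_pos hx.1⟩
      filter_upwards [hmem] with ε hε
      have hε0 : 0 < ε := hε.1
      have hε2 : ε < x := lt_of_lt_of_le hε.2 (min_le_right _ _)
      have hxε : x - ε ∈ Icc (0:ℝ) 1 := ⟨by linarith, by linarith [hx.2]⟩
      have hH := holder x (Ioc_subset_Icc_self hx) (x-ε) hxε
      have habs : |x - (x - ε)| = ε := by rw [show x - (x - ε) = ε by ring]; exact abs_of_pos hε0
      rw [habs] at hH
      have hrp : (0:ℝ) < ε ^ β' := Real.rpow_pos_of_pos hε0 β'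
      rw [Real.norm_eq_abs, abs_div, abs_of_pos hrp]
      rw [show (4*(2*C₀)+4) * ε ^ (α - β') = ((4*(2*C₀)+4) * ε ^ α) / ε ^ β' by
        rw [Real.rpow_sub hε0]; ring]
      exact (div_le_div_iff_of_pos_right hrp).2 hH
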